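/- arXiv:1007.5455 — 2 statements merged into one kernel-verified Lean document; each statement's English description precedes it below -/
import Mathlib

section
/- Let m be a (nonnegative Borel) measure on [0,∞) such that μ(t) := ∫_{[0,∞)} e^{-tx} m(dx) is finite for all t > 0. Then there exists a constant C > 1 such that μ(t) ≤ C · μ(t+1) for every t > 1. -/
/-!
Split the mass of `m` at a level `a` at which `m` already charges `[0, a]`. Below `a`, the kernel
`e^{-tx}` is at most `e^a e^{-(t+1)x}`; above `a`, it is at most `e^{-(t-1)a} e^{-x}`, so that part of
`μ t` is at most `e^{-(t-1)a} μ 1`. The mass on `[0, a]` gives `μ (t+1) ≥ e^{-ta} ∫_{[0,a]} e^{-x} dm`,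
which has the same exponential rate in `t` as the second bound.
-/

open MeasureTheory Set Real Filter Topology

noncomputable def laplaceIci (m : Measure ℝ) (t : ℝ) : ℝ :=
  ∫ x in Ici 0, exp (-t * x) ∂m

theorem exp_neg_mul_le_add (a x : ℝ) {t : ℝ} (ht : 1 ≤ t) :
    exp (-t * x) ≤ exp a * exp (-(t + 1) * x) + exp (-(t - 1) * a) * exp (-x) := by
  rcases le_or_gt x a with hxa | hax
  · have : exp (-t * x) ≤ exp a * exp (-(t + 1) * x) := by
      rw [← exp_add, exp_le_exp]; linarith
    linarith [(by positivity : 0 ≤ exp (-(t - 1) * a) * exp (-x))]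
  · have : exp (-t * x) ≤ exp (-(t - 1) * a) * exp (-x) := by
      rw [← exp_add, exp_le_exp]; nlinarith
    linarith [(by positivity : 0 ≤ exp a * exp (-(t + 1) * x))]

namespace laplaceIci

variable {m : Measure ℝ}

theorem nonneg (m : Measure ℝ) (t : ℝ) : 0 ≤ laplaceIci m t :=
  integral_nonneg fun _ => (exp_pos _).le

theorem le_exp_mul_add_exp_mul (a : ℝ) {t : ℝ} (ht : 1 ≤ t)
    (h1 : IntegrableOn (fun x => exp (-x)) (Ici 0) m)
    (ht1 : IntegrableOn (fun x => exp (-(t + 1) * x)) (Ici 0) m) :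
    laplaceIci m t ≤ exp a * laplaceIci m (t + 1) + exp (-(t - 1) * a) * laplaceIci m 1 := by
  have hsum := (ht1.const_mul (exp a)).add (h1.const_mul (exp (-(t - 1) * a)))
  calc laplaceIci m t
      ≤ ∫ x in Ici 0, (exp a * exp (-(t + 1) * x) + exp (-(t - 1) * a) * exp (-x)) ∂m :=
        integral_mono_of_nonneg (ae_of_all _ fun _ => (exp_pos _).le) hsum
          (ae_of_all _ fun x => exp_neg_mul_le_add a x ht)
    _ = exp a * laplaceIci m (t + 1) + exp (-(t - 1) * a) * laplaceIci m 1 := by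
        rw [integral_add (ht1.const_mul _) (h1.const_mul _), integral_const_mul,
          integral_const_mul]
        simp only [laplaceIci, neg_mul, one_mul]

theorem exp_mul_integral_Icc_le {a t : ℝ} (ht : 0 ≤ t)
    (ht1 : IntegrableOn (fun x => exp (-(t + 1) * x)) (Ici 0) m) :
    exp (-t * a) * ∫ x in Icc 0 a, exp (-x) ∂m ≤ laplaceIci m (t + 1) := by
  rw [← integral_const_mul]
  calc ∫ x in Icc 0 a, exp (-t * a) * exp (-x) ∂m
      ≤ ∫ x in Icc 0 a, exp (-(t + 1) * x) ∂m := by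
        refine integral_mono_of_nonneg (ae_of_all _ fun _ => by positivity)
          (ht1.mono_set Icc_subset_Ici_self) (ae_restrict_of_forall_mem measurableSet_Icc ?_)
        intro x hx
        simp only [← exp_add, exp_le_exp]
        nlinarith [hx.2]
    _ ≤ laplaceIci m (t + 1) :=
        setIntegral_mono_set ht1 (ae_of_all _ fun _ => (exp_pos _).le)
          Icc_subset_Ici_self.eventuallyLE

end laplaceIci

theorem exists_one_le_and_setIntegral_Icc_pos {m : Measure ℝ} {f : ℝ → ℝ}
    (hf : IntegrableOn f (Ici 0) m) (hpos : 0 < ∫ x in Ici 0, f x ∂m) :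
    ∃ a : ℝ, 1 ≤ a ∧ 0 < ∫ x in Icc 0 a, f x ∂m := by
  have hlim : Tendsto (fun a => ∫ x in Icc 0 a, f x ∂m) atTop (𝓝 (∫ x in Ici 0, f x ∂m)) := by
    rw [← iUnion_Icc_right] at hf ⊢
    exact tendsto_setIntegral_of_monotone (fun _ => measurableSet_Icc)
      (fun _ _ hab => Icc_subset_Icc_right hab) hf
  exact ((eventually_ge_atTop 1).and (hlim.eventually (lt_mem_nhds hpos))).exists

open laplaceIci in
theorem stmt_0 (m : Measure ℝ)
    (hfin : ∀ t : ℝ, 0 < t →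
      MeasureTheory.IntegrableOn (fun x => Real.exp (-t * x)) (Set.Ici 0) m)
    (μ : ℝ → ℝ)
    (hμ : ∀ t : ℝ, μ t = ∫ x in Set.Ici (0:ℝ), Real.exp (-t * x) ∂m) :
    ∃ C : ℝ, 1 < C ∧ ∀ t : ℝ, 1 < t → μ t ≤ C * μ (t + 1) := by
  obtain rfl : μ = laplaceIci m := funext hμ
  have h1 : IntegrableOn (fun x => exp (-x)) (Ici 0) m := by simpa using hfin 1 one_pos
  have hnext (t : ℝ) (ht : 1 < t) := hfin (t + 1) (by linarith)
  rcases (nonneg m 1).eq_or_lt with h0 | hpos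
  · refine ⟨exp 1, by simp [one_lt_exp_iff], fun t ht => ?_⟩
    simpa [← h0] using le_exp_mul_add_exp_mul 1 ht.le h1 (hnext t ht)
  obtain ⟨a, ha, hM⟩ :=
    exists_one_le_and_setIntegral_Icc_pos h1 (by simpa [laplaceIci] using hpos)
  set M := ∫ x in Icc 0 a, exp (-x) ∂m
  refine ⟨exp a * (1 + laplaceIci m 1 / M), ?_, fun t ht => ?_⟩
  · exact one_lt_mul_of_le_of_lt (one_le_exp (by linarith)) (by simp [hpos, hM])
  have htail : exp (-(t - 1) * a) * laplaceIci m 1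
      = exp a * (laplaceIci m 1 / M) * (exp (-t * a) * M) := by
    rw [show -(t - 1) * a = a + -t * a by ring, exp_add]
    field_simp
  calc laplaceIci m t
      ≤ exp a * laplaceIci m (t + 1) + exp (-(t - 1) * a) * laplaceIci m 1 :=
        le_exp_mul_add_exp_mul a ht.le h1 (hnext t ht)
    _ ≤ exp a * laplaceIci m (t + 1) + exp a * (laplaceIci m 1 / M) * laplaceIci m (t + 1) := by
        rw [htail]
        gcongr
        exact exp_mul_integral_Icc_le (by linarith) (hnext t ht)
    _ = exp a * (1 + laplaceIci m 1 / M) * laplaceIci m (t + 1) := by ring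
end

section
/- Let η : (0,∞) → [0,1] be measurable and γ ∈ ℝ, and define log φ(λ) = γ + ∫₀^∞ (t/(1+t²) − 1/(λ+t)) η(t) dt and log χ(λ) = γ/2 + ∫₀^∞ (t/(2(1+t²)) − 1/(2√t(λ+√t))) η(t) dt, assuming both integrals converge absolutely for all λ > 0. Then for every λ > 0, |log χ(λ) − (1/2) log φ(λ²)| ≤ π/2; equivalently e^{−π/2} √(φ(λ²)) ≤ χ(λ) ≤ e^{π/2} √(φ(λ²)). -/
open MeasureTheory Set Real Filter Topology

/-!
Subtracting `½ log φ(λ²)` from `log χ(λ)`, the `γ` and `t / (1 + t²)` terms cancel and what remains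
is `½ ∫₀^∞ (1/(λ² + t) - 1/(√t (λ + √t))) η(t) dt`. Since `|η| ≤ 1` and this kernel is dominated by
`λ / (√t (λ² + t))`, whose integral is `[2 arctan (√t / λ)]₀^∞ = π`, the bound follows.
-/

section ArctanSqrt

variable {a : ℝ}

lemma hasDerivAt_two_mul_arctan_sqrt_div (ha : a ≠ 0) {t : ℝ} (ht : 0 < t) :
    HasDerivAt (fun t => 2 * arctan (√t / a)) (a / (√t * (a ^ 2 + t))) t := by
  have hsqrt : HasDerivAt (fun u => √u / a) (1 / (2 * √t) / a) t :=
    (hasDerivAt_sqrt ht.ne').div_const a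
  refine (((hasDerivAt_arctan _).comp t hsqrt).const_mul 2).congr_deriv ?_
  have hs : √t ≠ 0 := (sqrt_pos.2 ht).ne'
  have hden : a ^ 2 + t ≠ 0 := by positivity
  field_simp
  rw [sq_sqrt ht.le]

lemma tendsto_two_mul_arctan_sqrt_div_atTop (ha : 0 < a) :
    Tendsto (fun t => 2 * arctan (√t / a)) atTop (𝓝 π) := by
  have h := ((tendsto_arctan_atTop.mono_right nhdsWithin_le_nhds).comp
    (tendsto_sqrt_atTop.atTop_div_const ha)).const_mul 2
  rwa [mul_div_cancel₀ π two_ne_zero] at h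

lemma integrableOn_div_sqrt_mul_sq_add (ha : 0 < a) :
    IntegrableOn (fun t => a / (√t * (a ^ 2 + t))) (Ioi 0) :=
  integrableOn_Ioi_deriv_of_nonneg (by fun_prop)
    (fun _ ht => hasDerivAt_two_mul_arctan_sqrt_div ha.ne' ht)
    (fun t (ht : 0 < t) => by positivity) (tendsto_two_mul_arctan_sqrt_div_atTop ha)

lemma integral_div_sqrt_mul_sq_add (ha : 0 < a) :
    ∫ t in Ioi (0 : ℝ), a / (√t * (a ^ 2 + t)) = π := by
  rw [integral_Ioi_of_hasDerivAt_of_nonneg (by fun_prop)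
    (fun _ ht => hasDerivAt_two_mul_arctan_sqrt_div ha.ne' ht)
    (fun t (ht : 0 < t) => by positivity) (tendsto_two_mul_arctan_sqrt_div_atTop ha)]
  simp

end ArctanSqrt

lemma abs_one_div_sq_add_sq_sub_le {a s : ℝ} (ha : 0 ≤ a) (hs : 0 < s) :
    |1 / (a ^ 2 + s ^ 2) - 1 / (s * (a + s))| ≤ a / (s * (a ^ 2 + s ^ 2)) := by
  have hden : 0 < (a ^ 2 + s ^ 2) * (s * (a + s)) := by positivity
  have hdiff : 1 / (a ^ 2 + s ^ 2) - 1 / (s * (a + s))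
      = a * (s - a) / ((a ^ 2 + s ^ 2) * (s * (a + s))) := by
    field_simp
    ring
  have hsub : |s - a| ≤ s + a := (abs_sub _ _).trans (by rw [abs_of_pos hs, abs_of_nonneg ha])
  rw [hdiff, abs_div, abs_of_pos hden, abs_mul, abs_of_nonneg ha,
    div_le_div_iff₀ hden (by positivity)]
  calc a * |s - a| * (s * (a ^ 2 + s ^ 2)) ≤ a * (s + a) * (s * (a ^ 2 + s ^ 2)) := by gcongr
    _ = a * ((a ^ 2 + s ^ 2) * (s * (a + s))) := by ring

lemma abs_one_div_sq_add_sub_le {a t : ℝ} (ha : 0 ≤ a) (ht : 0 < t) :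
    |1 / (a ^ 2 + t) - 1 / (√t * (a + √t))| ≤ a / (√t * (a ^ 2 + t)) := by
  simpa only [sq_sqrt ht.le] using abs_one_div_sq_add_sq_sub_le ha (sqrt_pos.2 ht)

lemma abs_setIntegral_Ioi_mul_le_pi {a : ℝ} (ha : 0 < a) {η : ℝ → ℝ}
    (hη : ∀ t > 0, |η t| ≤ 1) :
    |∫ t in Ioi (0 : ℝ), (1 / (a ^ 2 + t) - 1 / (√t * (a + √t))) * η t| ≤ π := by
  rw [← integral_div_sqrt_mul_sq_add ha, ← Real.norm_eq_abs]
  refine norm_integral_le_of_norm_le (integrableOn_div_sqrt_mul_sq_add ha)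
    ((ae_restrict_iff' measurableSet_Ioi).2 (Eventually.of_forall fun t (ht : 0 < t) => ?_))
  rw [Real.norm_eq_abs, abs_mul]
  exact (mul_le_of_le_one_right (abs_nonneg _) (hη t ht)).trans
    (abs_one_div_sq_add_sub_le ha.le ht)

lemma exp_neg_mul_sqrt_le_and_le_exp_mul_sqrt {x y c : ℝ} (hx : 0 < x) (hy : 0 < y)
    (h : |log x - 1 / 2 * log y| ≤ c) : exp (-c) * √y ≤ x ∧ x ≤ exp c * √y := by
  have hsqrt : √y = exp (1 / 2 * log y) := by
    rw [sqrt_eq_rpow, rpow_def_of_pos hy, mul_comm]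
  rw [hsqrt, ← exp_add, ← exp_add, ← exp_log hx, exp_le_exp, exp_le_exp]
  constructor <;> linarith [abs_le.1 h]

theorem stmt_5_general (η : ℝ → ℝ) (hη : ∀ t > 0, η t ∈ Set.Icc (0:ℝ) 1)
    (γ : ℝ) (φ χ : ℝ → ℝ)
    (hφpos : ∀ lam > 0, 0 < φ lam) (hχpos : ∀ lam > 0, 0 < χ lam)
    (hφint : ∀ lam > 0, MeasureTheory.IntegrableOn
      (fun t => (t / (1 + t ^ 2) - 1 / (lam + t)) * η t) (Set.Ioi 0))
    (hχint : ∀ lam > 0, MeasureTheory.IntegrableOn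
      (fun t => (t / (2 * (1 + t ^ 2)) - 1 / (2 * Real.sqrt t * (lam + Real.sqrt t))) * η t)
      (Set.Ioi 0))
    (hφ : ∀ lam > 0, Real.log (φ lam)
      = γ + ∫ t in Set.Ioi (0:ℝ), (t / (1 + t ^ 2) - 1 / (lam + t)) * η t)
    (hχ : ∀ lam > 0, Real.log (χ lam)
      = γ / 2 + ∫ t in Set.Ioi (0:ℝ),
          (t / (2 * (1 + t ^ 2)) - 1 / (2 * Real.sqrt t * (lam + Real.sqrt t))) * η t) :
    ∀ lam > 0,
      |Real.log (χ lam) - (1 / 2) * Real.log (φ (lam ^ 2))| ≤ Real.pi / 2 ∧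
      Real.exp (-Real.pi / 2) * Real.sqrt (φ (lam ^ 2)) ≤ χ lam ∧
      χ lam ≤ Real.exp (Real.pi / 2) * Real.sqrt (φ (lam ^ 2)) := by
  intro lam hlam
  have hlam2 : 0 < lam ^ 2 := by positivity
  have hsplit : (∫ t in Ioi (0 : ℝ),
        (t / (2 * (1 + t ^ 2)) - 1 / (2 * √t * (lam + √t))) * η t)
      - 1 / 2 * ∫ t in Ioi (0 : ℝ), (t / (1 + t ^ 2) - 1 / (lam ^ 2 + t)) * η t
      = 1 / 2 * ∫ t in Ioi (0 : ℝ), (1 / (lam ^ 2 + t) - 1 / (√t * (lam + √t))) * η t := by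
    rw [← integral_const_mul, ← integral_const_mul,
      ← integral_sub (hχint lam hlam) ((hφint _ hlam2).const_mul _)]
    congr 1 with t
    simp only [div_mul_eq_div_div]
    ring
  have hdiff : log (χ lam) - 1 / 2 * log (φ (lam ^ 2))
      = 1 / 2 * ∫ t in Ioi (0 : ℝ), (1 / (lam ^ 2 + t) - 1 / (√t * (lam + √t))) * η t := by
    rw [hχ lam hlam, hφ _ hlam2, ← hsplit]
    ring
  have hbound : |log (χ lam) - 1 / 2 * log (φ (lam ^ 2))| ≤ π / 2 := by
    rw [hdiff, abs_mul, abs_of_pos one_half_pos]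
    linarith [abs_setIntegral_Ioi_mul_le_pi hlam fun t ht =>
      abs_le.2 ⟨by linarith [(hη t ht).1], (hη t ht).2⟩]
  rw [neg_div]
  exact ⟨hbound, exp_neg_mul_sqrt_le_and_le_exp_mul_sqrt (hχpos lam hlam) (hφpos _ hlam2) hbound⟩

theorem stmt_5 (η : ℝ → ℝ) (hη : ∀ t > 0, η t ∈ Set.Icc (0:ℝ) 1)
    (hηm : Measurable η) (γ : ℝ) (φ χ : ℝ → ℝ)
    (hφpos : ∀ lam > 0, 0 < φ lam) (hχpos : ∀ lam > 0, 0 < χ lam)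
    (hφint : ∀ lam > 0, MeasureTheory.IntegrableOn
      (fun t => (t / (1 + t ^ 2) - 1 / (lam + t)) * η t) (Set.Ioi 0))
    (hχint : ∀ lam > 0, MeasureTheory.IntegrableOn
      (fun t => (t / (2 * (1 + t ^ 2)) - 1 / (2 * Real.sqrt t * (lam + Real.sqrt t))) * η t)
      (Set.Ioi 0))
    (hφ : ∀ lam > 0, Real.log (φ lam)
      = γ + ∫ t in Set.Ioi (0:ℝ), (t / (1 + t ^ 2) - 1 / (lam + t)) * η t)
    (hχ : ∀ lam > 0, Real.log (χ lam)
      = γ / 2 + ∫ t in Set.Ioi (0:ℝ),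
          (t / (2 * (1 + t ^ 2)) - 1 / (2 * Real.sqrt t * (lam + Real.sqrt t))) * η t) :
    ∀ lam > 0,
      |Real.log (χ lam) - (1 / 2) * Real.log (φ (lam ^ 2))| ≤ Real.pi / 2 ∧
      Real.exp (-Real.pi / 2) * Real.sqrt (φ (lam ^ 2)) ≤ χ lam ∧
      χ lam ≤ Real.exp (Real.pi / 2) * Real.sqrt (φ (lam ^ 2)) :=
  stmt_5_general η hη γ φ χ hφpos hχpos hφint hχint hφ hχ
end
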